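/- arXiv:1503.01745 — 3 statements merged into one kernel-verified Lean document; each statement's English description precedes it below -/
import Mathlib

section
/- Let c > 0, α ≥ 0 and χ ∈ ℝ, and let (β_k)_{k≥0} be a real sequence with β_k = 0 for all odd k, β_0 ≥ 0, satisfying for every k ≥ 0 the three-term recursion (with the convention that the β_{k−2}-term is absent for k < 2): [√((k+1)(k+2)(k+2α+1)(k+2α+2)) / ((2k+2α+3)√((2k+2α+5)(2k+2α+1)))] c² β_{k+2} + [k(k+2α+1) + c² (2k(k+2α+1)+2α−1)/((2k+2α+3)(2k+2α−1))] β_k + [√(k(k−1)(k+2α)(k+2α−1)) / ((2k+2α−1)√((2k+2α+1)(2k+2α−3)))] c² β_{k−2} = χ β_k. Set C_α = 2M_α + N_α with M_α = max(1/4, √(2(2α+2)/((2α+5)(2α+3)²))) and N_α = max(3/(2α+5), 1/2 + |4α²−1|/((2α+3)(2α+7))). Then β_k ≥ 0 for every integer k ≥ 0 with k(k+2α+1) + C_α c² ≤ χ. -/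
/-- The constant `M_α = max(1/4, √(2(2α+2)/((2α+5)(2α+3)²)))`. -/
noncomputable def Mconst (α : ℝ) : ℝ :=
  max (1 / 4) (Real.sqrt (2 * (2 * α + 2) / ((2 * α + 5) * (2 * α + 3) ^ 2)))

/-- The constant `N_α = max(3/(2α+5), 1/2 + |4α²−1|/((2α+3)(2α+7)))`. -/
noncomputable def Nconst (α : ℝ) : ℝ :=
  max (3 / (2 * α + 5)) (1 / 2 + |4 * α ^ 2 - 1| / ((2 * α + 3) * (2 * α + 7)))

private lemma sqrtdiv_le {N p d M : ℝ} (hN : 0 ≤ N) (hp : 0 < p) (hd : 0 < d) (hM : 0 ≤ M)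
    (h : N ≤ M ^ 2 * (p ^ 2 * d)) : Real.sqrt N / (p * Real.sqrt d) ≤ M := by
  have hsd : 0 < Real.sqrt d := Real.sqrt_pos.mpr hd
  rw [div_le_iff₀ (by positivity)]
  have he : M * (p * Real.sqrt d) = Real.sqrt (M ^ 2 * (p ^ 2 * d)) := by
    rw [Real.sqrt_mul (by positivity), Real.sqrt_mul (by positivity), Real.sqrt_sq hM,
      Real.sqrt_sq hp.le]
  rw [he]
  exact Real.sqrt_le_sqrt h

private lemma Mconst_nonneg (α : ℝ) : 0 ≤ Mconst α :=
  le_trans (by norm_num) (le_max_left _ _)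

private lemma aux_a_le_M {α x : ℝ} (hα : 0 ≤ α) (hx : 0 ≤ x) :
    Real.sqrt ((x + 1) * (x + 2) * (x + 2 * α + 1) * (x + 2 * α + 2)) /
      ((2 * x + 2 * α + 3) * Real.sqrt ((2 * x + 2 * α + 5) * (2 * x + 2 * α + 1))) ≤
      Mconst α := by
  have hM0 := Mconst_nonneg α
  apply sqrtdiv_le (by positivity) (by linarith) (by nlinarith) hM0
  have hpd0 : (0:ℝ) ≤ (2 * x + 2 * α + 3) ^ 2 * ((2 * x + 2 * α + 5) * (2 * x + 2 * α + 1)) := by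
    have : (0:ℝ) ≤ (2 * x + 2 * α + 5) * (2 * x + 2 * α + 1) := by nlinarith
    positivity
  rcases le_total (2 * α) 1 with h2a | h2a
  · -- small α branch: use the √(2(2α+2)/...) part of Mconst
    have hr0 : (0:ℝ) ≤ 2 * (2 * α + 2) / ((2 * α + 5) * (2 * α + 3) ^ 2) := by positivity
    have hrM : 2 * (2 * α + 2) / ((2 * α + 5) * (2 * α + 3) ^ 2) ≤ Mconst α ^ 2 := by
      have h1 : Real.sqrt (2 * (2 * α + 2) / ((2 * α + 5) * (2 * α + 3) ^ 2)) ≤ Mconst α :=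
        le_max_right _ _
      calc 2 * (2 * α + 2) / ((2 * α + 5) * (2 * α + 3) ^ 2)
          = Real.sqrt (2 * (2 * α + 2) / ((2 * α + 5) * (2 * α + 3) ^ 2)) ^ 2 :=
            (Real.sq_sqrt hr0).symm
        _ ≤ Mconst α ^ 2 := by
            exact pow_le_pow_left₀ (Real.sqrt_nonneg _) h1 2
    have hW : (0:ℝ) < (2 * α + 5) * (2 * α + 3) ^ 2 := by positivity
    have mono : ∀ i j : ℕ, (0:ℝ) ≤ x ^ i * α ^ j := fun i j =>
      mul_nonneg (pow_nonneg hx i) (pow_nonneg hα j)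
    have hR : (0:ℝ) ≤ (132 + 430 * α + 516 * α ^ 2 + 264 * α ^ 3 + 48 * α ^ 4)
        + x * (215 + 558 * α + 496 * α ^ 2 + 168 * α ^ 3 + 16 * α ^ 4)
        + x ^ 2 * (114 + 220 * α + 120 * α ^ 2 + 16 * α ^ 3)
        + x ^ 3 * (19 + 24 * α + 4 * α ^ 2) := by
      nlinarith [mono 0 1, mono 0 2, mono 0 3, mono 0 4, mono 1 0, mono 1 1, mono 1 2,
        mono 1 3, mono 1 4, mono 2 0, mono 2 1, mono 2 2, mono 2 3, mono 3 0, mono 3 1,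
        mono 3 2]
    have key : (0:ℝ) ≤ x * ((1 - 2 * α) * ((132 + 430 * α + 516 * α ^ 2 + 264 * α ^ 3 + 48 * α ^ 4)
        + x * (215 + 558 * α + 496 * α ^ 2 + 168 * α ^ 3 + 16 * α ^ 4)
        + x ^ 2 * (114 + 220 * α + 120 * α ^ 2 + 16 * α ^ 3)
        + x ^ 3 * (19 + 24 * α + 4 * α ^ 2))) :=
      mul_nonneg hx (mul_nonneg (by linarith) hR)
    have hpoly : (x + 1) * (x + 2) * (x + 2 * α + 1) * (x + 2 * α + 2) ≤
        (2 * (2 * α + 2) / ((2 * α + 5) * (2 * α + 3) ^ 2)) *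
          ((2 * x + 2 * α + 3) ^ 2 * ((2 * x + 2 * α + 5) * (2 * x + 2 * α + 1))) := by
      rw [div_mul_eq_mul_div, le_div_iff₀ hW]
      nlinarith [key]
    calc (x + 1) * (x + 2) * (x + 2 * α + 1) * (x + 2 * α + 2) ≤ _ := hpoly
      _ ≤ Mconst α ^ 2 * ((2 * x + 2 * α + 3) ^ 2 * ((2 * x + 2 * α + 5) * (2 * x + 2 * α + 1))) :=
          mul_le_mul_of_nonneg_right hrM hpd0
  · -- large α branch: use the 1/4 part of Mconst
    have hM2 : (1:ℝ) / 16 ≤ Mconst α ^ 2 := by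
      have h1 : (1:ℝ) / 4 ≤ Mconst α := le_max_left _ _
      nlinarith
    have key : (0:ℝ) ≤ (4 * α ^ 2 - 1) * (2 * (2 * x + 2 * α + 3) ^ 2 - (4 * α ^ 2 - 1)) := by
      apply mul_nonneg
      · nlinarith
      · nlinarith [mul_nonneg hx hα, mul_nonneg hx hx, mul_nonneg hα hα]
    have h16 : (x + 1) * (x + 2) * (x + 2 * α + 1) * (x + 2 * α + 2) ≤
        1 / 16 * ((2 * x + 2 * α + 3) ^ 2 * ((2 * x + 2 * α + 5) * (2 * x + 2 * α + 1))) := by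
      nlinarith [key]
    calc (x + 1) * (x + 2) * (x + 2 * α + 1) * (x + 2 * α + 2) ≤ _ := h16
      _ ≤ Mconst α ^ 2 * ((2 * x + 2 * α + 3) ^ 2 * ((2 * x + 2 * α + 5) * (2 * x + 2 * α + 1))) :=
          mul_le_mul_of_nonneg_right hM2 hpd0

private lemma aux_a_pos {α x : ℝ} (hα : 0 ≤ α) (hx : 0 ≤ x) :
    0 < Real.sqrt ((x + 1) * (x + 2) * (x + 2 * α + 1) * (x + 2 * α + 2)) /
      ((2 * x + 2 * α + 3) * Real.sqrt ((2 * x + 2 * α + 5) * (2 * x + 2 * α + 1))) := by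
  have hnum : (0:ℝ) < (x + 1) * (x + 2) * (x + 2 * α + 1) * (x + 2 * α + 2) :=
    mul_pos (mul_pos (mul_pos (by linarith) (by linarith)) (by linarith)) (by linarith)
  have h1 : (0:ℝ) < (2 * x + 2 * α + 5) * (2 * x + 2 * α + 1) :=
    mul_pos (by linarith) (by linarith)
  exact div_pos (Real.sqrt_pos.mpr hnum)
    (mul_pos (by linarith) (Real.sqrt_pos.mpr h1))

private lemma aux_q_le_N {α x : ℝ} (hα : 0 ≤ α) (hx : 2 ≤ x) :
    (2 * x * (x + 2 * α + 1) + 2 * α - 1) / ((2 * x + 2 * α + 3) * (2 * x + 2 * α - 1)) ≤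
      Nconst α := by
  have hden : (0:ℝ) < (2 * x + 2 * α + 3) * (2 * x + 2 * α - 1) := by nlinarith
  rw [div_le_iff₀ hden]
  have hN : 1 / 2 + |4 * α ^ 2 - 1| / ((2 * α + 3) * (2 * α + 7)) ≤ Nconst α := le_max_right _ _
  have hW : (0:ℝ) < (2 * α + 3) * (2 * α + 7) := by positivity
  have hG0 : 0 ≤ |4 * α ^ 2 - 1| / ((2 * α + 3) * (2 * α + 7)) := by positivity
  have hGe : |4 * α ^ 2 - 1| / ((2 * α + 3) * (2 * α + 7)) * ((2 * α + 3) * (2 * α + 7)) =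
      |4 * α ^ 2 - 1| := div_mul_cancel₀ _ hW.ne'
  have habs : 1 - 4 * α ^ 2 ≤ |4 * α ^ 2 - 1| := by
    rw [abs_sub_comm]; exact le_abs_self _
  have habs0 : 0 ≤ |4 * α ^ 2 - 1| := abs_nonneg _
  have hdg : (2 * α + 3) * (2 * α + 7) ≤ (2 * x + 2 * α + 3) * (2 * x + 2 * α - 1) := by
    nlinarith [mul_nonneg (show (0:ℝ) ≤ x - 2 by linarith) (show (0:ℝ) ≤ x + 3 + 2 * α by linarith)]
  nlinarith [mul_le_mul_of_nonneg_right hN hden.le,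
    mul_le_mul_of_nonneg_left hdg hG0, hGe, habs, habs0]

private lemma aux_q0_le_N {α : ℝ} (hα : 0 ≤ α) :
    (2 * α - 1) / ((2 * α + 3) * (2 * α - 1)) ≤ Nconst α := by
  have h35 : (1:ℝ) / (2 * α + 3) ≤ 3 / (2 * α + 5) := by
    rw [div_le_div_iff₀ (by linarith) (by linarith)]
    linarith
  have hN : 3 / (2 * α + 5) ≤ Nconst α := le_max_left _ _
  rcases eq_or_ne (2 * α - 1) 0 with h | h
  · rw [h, zero_div]
    have : (0:ℝ) ≤ 3 / (2 * α + 5) := by positivity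
    linarith
  · rw [mul_comm (2 * α + 3) (2 * α - 1), ← div_div, div_self h]
    linarith

/-- Positivity of the coefficients of the tridiagonal eigensystem of
the perturbed Gegenbauer operator: if the real sequence `(β_k)` vanishes for odd `k`,
has `β_0 ≥ 0` and satisfies the three-term recursion with eigenvalue `χ` (the `β_{k-2}`
coefficient, `√(k(k-1)(k+2α)(k+2α-1))/((2k+2α-1)√((2k+2α+1)(2k+2α-3)))`, vanishes for
`k < 2`, so the formula below covers all `k`), then `β_k ≥ 0` whenever
`k(k+2α+1) + C_α c² ≤ χ` with `C_α = 2M_α + N_α`. -/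
theorem positivity_expansion_coefficients
    (c α χ : ℝ) (hc : 0 < c) (hα : 0 ≤ α)
    (β : ℕ → ℝ) (hβodd : ∀ k : ℕ, Odd k → β k = 0) (hβ0 : 0 ≤ β 0)
    (hrec : ∀ k : ℕ,
      (Real.sqrt (((k : ℝ) + 1) * ((k : ℝ) + 2) * ((k : ℝ) + 2 * α + 1) * ((k : ℝ) + 2 * α + 2)) /
          ((2 * (k : ℝ) + 2 * α + 3) *
            Real.sqrt ((2 * (k : ℝ) + 2 * α + 5) * (2 * (k : ℝ) + 2 * α + 1)))) * c ^ 2 * β (k + 2)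
        + ((k : ℝ) * ((k : ℝ) + 2 * α + 1)
            + c ^ 2 * (2 * (k : ℝ) * ((k : ℝ) + 2 * α + 1) + 2 * α - 1) /
                ((2 * (k : ℝ) + 2 * α + 3) * (2 * (k : ℝ) + 2 * α - 1))) * β k
        + (Real.sqrt ((k : ℝ) * ((k : ℝ) - 1) * ((k : ℝ) + 2 * α) * ((k : ℝ) + 2 * α - 1)) /
            ((2 * (k : ℝ) + 2 * α - 1) *
              Real.sqrt ((2 * (k : ℝ) + 2 * α + 1) * (2 * (k : ℝ) + 2 * α - 3)))) * c ^ 2 * β (k - 2)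
        = χ * β k) :
    ∀ k : ℕ, (k : ℝ) * ((k : ℝ) + 2 * α + 1) + (2 * Mconst α + Nconst α) * c ^ 2 ≤ χ →
      0 ≤ β k := by
  have hM0 := Mconst_nonneg α
  have hc2 : (0:ℝ) < c ^ 2 := by positivity
  -- the inductive step
  have hstep : ∀ k : ℕ, (k = 0 ∨ 2 ≤ k) →
      ((k : ℝ) * ((k : ℝ) + 2 * α + 1) + (2 * Mconst α + Nconst α) * c ^ 2 ≤ χ) →
      0 ≤ β k → β (k - 2) ≤ β k → β k ≤ β (k + 2) := by
    intro k hk2 hχk h0 hmono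
    have hx0 : (0:ℝ) ≤ (k : ℝ) := Nat.cast_nonneg k
    have hA : 0 < Real.sqrt (((k : ℝ) + 1) * ((k : ℝ) + 2) * ((k : ℝ) + 2 * α + 1) * ((k : ℝ) + 2 * α + 2)) /
        ((2 * (k : ℝ) + 2 * α + 3) *
          Real.sqrt ((2 * (k : ℝ) + 2 * α + 5) * (2 * (k : ℝ) + 2 * α + 1))) :=
      aux_a_pos hα hx0
    have hAM : Real.sqrt (((k : ℝ) + 1) * ((k : ℝ) + 2) * ((k : ℝ) + 2 * α + 1) * ((k : ℝ) + 2 * α + 2)) /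
        ((2 * (k : ℝ) + 2 * α + 3) *
          Real.sqrt ((2 * (k : ℝ) + 2 * α + 5) * (2 * (k : ℝ) + 2 * α + 1))) ≤ Mconst α :=
      aux_a_le_M hα hx0
    obtain ⟨hb, hbM, hq⟩ :
        (0 ≤ Real.sqrt ((k : ℝ) * ((k : ℝ) - 1) * ((k : ℝ) + 2 * α) * ((k : ℝ) + 2 * α - 1)) /
            ((2 * (k : ℝ) + 2 * α - 1) *
              Real.sqrt ((2 * (k : ℝ) + 2 * α + 1) * (2 * (k : ℝ) + 2 * α - 3)))) ∧
        (Real.sqrt ((k : ℝ) * ((k : ℝ) - 1) * ((k : ℝ) + 2 * α) * ((k : ℝ) + 2 * α - 1)) /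
            ((2 * (k : ℝ) + 2 * α - 1) *
              Real.sqrt ((2 * (k : ℝ) + 2 * α + 1) * (2 * (k : ℝ) + 2 * α - 3))) ≤ Mconst α) ∧
        ((2 * (k : ℝ) * ((k : ℝ) + 2 * α + 1) + 2 * α - 1) /
            ((2 * (k : ℝ) + 2 * α + 3) * (2 * (k : ℝ) + 2 * α - 1)) ≤ Nconst α) := by
      rcases hk2 with rfl | hk2
      · have e0 : ((0:ℕ) : ℝ) * (((0:ℕ) : ℝ) - 1) * (((0:ℕ) : ℝ) + 2 * α) * (((0:ℕ) : ℝ) + 2 * α - 1)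
            = 0 := by norm_num
        have enum : 2 * ((0:ℕ) : ℝ) * (((0:ℕ) : ℝ) + 2 * α + 1) + 2 * α - 1 = 2 * α - 1 := by
          norm_num
        have eden : (2 * ((0:ℕ) : ℝ) + 2 * α + 3) * (2 * ((0:ℕ) : ℝ) + 2 * α - 1)
            = (2 * α + 3) * (2 * α - 1) := by norm_num
        refine ⟨?_, ?_, ?_⟩
        · rw [e0, Real.sqrt_zero, zero_div]
        · rw [e0, Real.sqrt_zero, zero_div]; exact hM0
        · rw [enum, eden]; exact aux_q0_le_N hα
      · have hx2 : (2:ℝ) ≤ (k : ℝ) := by exact_mod_cast hk2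
        have hy0 : (0:ℝ) ≤ (k : ℝ) - 2 := by linarith
        have e1 : (k : ℝ) * ((k : ℝ) - 1) * ((k : ℝ) + 2 * α) * ((k : ℝ) + 2 * α - 1) =
            (((k : ℝ) - 2) + 1) * (((k : ℝ) - 2) + 2) * (((k : ℝ) - 2) + 2 * α + 1) *
              (((k : ℝ) - 2) + 2 * α + 2) := by ring
        have e2 : 2 * (k : ℝ) + 2 * α - 1 = 2 * ((k : ℝ) - 2) + 2 * α + 3 := by ring
        have e3 : (2 * (k : ℝ) + 2 * α + 1) * (2 * (k : ℝ) + 2 * α - 3) =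
            (2 * ((k : ℝ) - 2) + 2 * α + 5) * (2 * ((k : ℝ) - 2) + 2 * α + 1) := by ring
        refine ⟨?_, ?_, aux_q_le_N hα hx2⟩
        · rw [e1, e2, e3]; exact (aux_a_pos hα hy0).le
        · rw [e1, e2, e3]; exact aux_a_le_M hα hy0
      -- end obtain
    have hAc : Real.sqrt (((k : ℝ) + 1) * ((k : ℝ) + 2) * ((k : ℝ) + 2 * α + 1) * ((k : ℝ) + 2 * α + 2)) /
        ((2 * (k : ℝ) + 2 * α + 3) *
          Real.sqrt ((2 * (k : ℝ) + 2 * α + 5) * (2 * (k : ℝ) + 2 * α + 1))) * c ^ 2 ≤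
        Mconst α * c ^ 2 := mul_le_mul_of_nonneg_right hAM hc2.le
    have hBc : Real.sqrt ((k : ℝ) * ((k : ℝ) - 1) * ((k : ℝ) + 2 * α) * ((k : ℝ) + 2 * α - 1)) /
        ((2 * (k : ℝ) + 2 * α - 1) *
          Real.sqrt ((2 * (k : ℝ) + 2 * α + 1) * (2 * (k : ℝ) + 2 * α - 3))) * c ^ 2 ≤
        Mconst α * c ^ 2 := mul_le_mul_of_nonneg_right hbM hc2.le
    have hqc : c ^ 2 * (2 * (k : ℝ) * ((k : ℝ) + 2 * α + 1) + 2 * α - 1) /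
        ((2 * (k : ℝ) + 2 * α + 3) * (2 * (k : ℝ) + 2 * α - 1)) ≤ c ^ 2 * Nconst α := by
      rw [mul_div_assoc]
      exact mul_le_mul_of_nonneg_left hq hc2.le
    have hcoef : 0 ≤ χ - ((k : ℝ) * ((k : ℝ) + 2 * α + 1)
          + c ^ 2 * (2 * (k : ℝ) * ((k : ℝ) + 2 * α + 1) + 2 * α - 1) /
              ((2 * (k : ℝ) + 2 * α + 3) * (2 * (k : ℝ) + 2 * α - 1)))
        - Real.sqrt ((k : ℝ) * ((k : ℝ) - 1) * ((k : ℝ) + 2 * α) * ((k : ℝ) + 2 * α - 1)) /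
            ((2 * (k : ℝ) + 2 * α - 1) *
              Real.sqrt ((2 * (k : ℝ) + 2 * α + 1) * (2 * (k : ℝ) + 2 * α - 3))) * c ^ 2
        - Real.sqrt (((k : ℝ) + 1) * ((k : ℝ) + 2) * ((k : ℝ) + 2 * α + 1) * ((k : ℝ) + 2 * α + 2)) /
            ((2 * (k : ℝ) + 2 * α + 3) *
              Real.sqrt ((2 * (k : ℝ) + 2 * α + 5) * (2 * (k : ℝ) + 2 * α + 1))) * c ^ 2 := by
      nlinarith [hχk, hqc, hAc, hBc]
    have hmono' := mul_le_mul_of_nonneg_left hmono (mul_nonneg hb hc2.le)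
    have h1 : (Real.sqrt (((k : ℝ) + 1) * ((k : ℝ) + 2) * ((k : ℝ) + 2 * α + 1) * ((k : ℝ) + 2 * α + 2)) /
        ((2 * (k : ℝ) + 2 * α + 3) *
          Real.sqrt ((2 * (k : ℝ) + 2 * α + 5) * (2 * (k : ℝ) + 2 * α + 1))) * c ^ 2) * β k ≤
        (Real.sqrt (((k : ℝ) + 1) * ((k : ℝ) + 2) * ((k : ℝ) + 2 * α + 1) * ((k : ℝ) + 2 * α + 2)) /
        ((2 * (k : ℝ) + 2 * α + 3) *
          Real.sqrt ((2 * (k : ℝ) + 2 * α + 5) * (2 * (k : ℝ) + 2 * α + 1))) * c ^ 2) * β (k + 2) := by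
      nlinarith [hrec k, hmono', mul_nonneg h0 hcoef]
    exact le_of_mul_le_mul_left h1 (mul_pos hA hc2)
  -- main induction over even indices
  have main : ∀ n : ℕ,
      ((n + n : ℕ) : ℝ) * (((n + n : ℕ) : ℝ) + 2 * α + 1) + (2 * Mconst α + Nconst α) * c ^ 2 ≤ χ →
      0 ≤ β (n + n) ∧ β (n + n) ≤ β (n + n + 2) := by
    intro n
    induction n with
    | zero =>
      intro h
      refine ⟨hβ0, ?_⟩
      have h' : ((0:ℕ) : ℝ) * (((0:ℕ) : ℝ) + 2 * α + 1) + (2 * Mconst α + Nconst α) * c ^ 2 ≤ χ := by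
        push_cast at h ⊢
        linarith
      exact hstep 0 (Or.inl rfl) h' hβ0 le_rfl
    | succ n ih =>
      intro h
      have e2 : n + 1 + (n + 1) = n + n + 2 := by omega
      rw [e2] at h ⊢
      have hn0 : (0:ℝ) ≤ (n : ℝ) := Nat.cast_nonneg n
      have hlam : ((n + n : ℕ) : ℝ) * (((n + n : ℕ) : ℝ) + 2 * α + 1)
          + (2 * Mconst α + Nconst α) * c ^ 2 ≤ χ := by
        push_cast at h ⊢
        nlinarith [h, hn0, hα]
      obtain ⟨ih0, ih1⟩ := ih hlam
      have h02 : 0 ≤ β (n + n + 2) := le_trans ih0 ih1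
      refine ⟨h02, ?_⟩
      have hmono2 : β (n + n + 2 - 2) ≤ β (n + n + 2) := by simpa using ih1
      exact hstep (n + n + 2) (Or.inr (by omega)) h h02 hmono2
  intro k hk
  rcases Nat.even_or_odd k with he | ho
  · obtain ⟨n, rfl⟩ := he
    exact (main n hk).1
  · rw [hβodd k ho]
end

section
/- Let c > 0 and α ≥ 0. Let f ∈ L²(ℝ) be such that its Fourier transform f̂ vanishes a.e. outside [−c,c], with continuous representative f(x) = (1/2π)∫_{−c}^{c} e^{ixξ} f̂(ξ) dξ. Let ψ : [−1,1] → ℝ be continuous and μ ∈ ℂ satisfy ∫_{−1}^{1} e^{icxy} ψ(y) (1−y²)^α dy = μ ψ(x) for all x ∈ [−1,1]. Then |∫_{−1}^{1} f(x) ψ(x) (1−x²)^α dx| ≤ |μ| · √(c/(2π)) · (∫_{−1}^{1} ψ(t)² dt)^{1/2} · ‖f‖_{L²(ℝ)}. -/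
/-!
On `[-c, c]` the Fourier coefficients of `ξ ↦ e^{isξ} F(ξ)` are, up to the factor `π / c`, the
samples of `f` on the grid `s + (π / c) ℤ`. Parseval's identity on `[-c, c]`, integrated over
`s ∈ (0, π / c]`, therefore gives Plancherel's identity `∫ |f|² = (2π)⁻¹ ∫_{-c}^{c} |F|²` for
band-limited `f` without the `L²` Fourier transform. By Fubini and the eigenvalue equation,
`∫_{-1}^{1} f ψ ω = (μ / 2π) ∫_{-c}^{c} ψ(ξ / c) F(ξ) dξ`, and Cauchy–Schwarz together with
`∫_{-c}^{c} ψ(ξ / c)² dξ = c ∫_{-1}^{1} ψ²` gives the bound.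
-/

open MeasureTheory Set Complex
open scoped Real ENNReal

theorem ContinuousOn.memLp_restrict_Ioc {E : Type*} [NormedAddCommGroup E] {a b : ℝ}
    {g : ℝ → E} (hg : ContinuousOn g (Icc a b)) (p : ℝ≥0∞) :
    MemLp g p (volume.restrict (Ioc a b)) := by
  obtain ⟨C, hC⟩ := isCompact_Icc.exists_bound_of_continuousOn hg
  exact .of_bound ((hg.mono Ioc_subset_Icc_self).aestronglyMeasurable measurableSet_Ioc) C
    (ae_restrict_of_forall_mem measurableSet_Ioc fun x hx => hC x (Ioc_subset_Icc_self hx))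

theorem norm_integral_mul_le_sqrt_mul_sqrt {α 𝕜 : Type*} [RCLike 𝕜] [MeasurableSpace α]
    {μ : Measure α} {f g : α → 𝕜} (hf : MemLp f 2 μ) (hg : MemLp g 2 μ) :
    ‖∫ a, f a * g a ∂μ‖ ≤ √(∫ a, ‖f a‖ ^ 2 ∂μ) * √(∫ a, ‖g a‖ ^ 2 ∂μ) := by
  have hholder := integral_mul_norm_le_Lp_mul_Lq Real.HolderConjugate.two_two
    (by rwa [ENNReal.ofReal_ofNat] : MemLp f (ENNReal.ofReal 2) μ)
    (by rwa [ENNReal.ofReal_ofNat] : MemLp g (ENNReal.ofReal 2) μ)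
  simp only [Real.rpow_two, ← Real.sqrt_eq_rpow] at hholder
  calc ‖∫ a, f a * g a ∂μ‖ ≤ ∫ a, ‖f a‖ * ‖g a‖ ∂μ := by
        simpa only [norm_mul] using norm_integral_le_integral_norm (fun a => f a * g a)
    _ ≤ _ := hholder

theorem lintegral_eq_setLIntegral_tsum_add_zsmul {T : ℝ} (hT : 0 < T) {g : ℝ → ℝ≥0∞}
    (hg : Measurable g) :
    ∫⁻ x, g x = ∫⁻ s in Ioc 0 T, ∑' n : ℤ, g (s + n • T) := by
  rw [lintegral_tsum (f := fun (n : ℤ) s => g (s + n • T)) fun n => by fun_prop,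
    ← setLIntegral_univ, ← iUnion_Ioc_add_zsmul hT 0,
    lintegral_iUnion (fun _ => measurableSet_Ioc) (pairwise_disjoint_Ioc_add_zsmul 0 T)]
  refine tsum_congr fun n => ?_
  rw [← (measurePreserving_add_right volume (n • T)).setLIntegral_comp_preimage_emb
    (measurableEmbedding_addRight _), preimage_add_const_Ioc]
  congr 2
  simp only [zero_add, sub_self, add_zsmul, one_zsmul, add_sub_cancel_left]

theorem integral_exp_mul_integral_swap {μ ν : Measure ℝ} [SFinite μ] [SFinite ν] {φ F : ℝ → ℂ}
    (hφ : Integrable φ μ) (hF : Integrable F ν) :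
    ∫ x, (∫ ξ, exp (I * (x * ξ : ℝ)) * F ξ ∂ν) * φ x ∂μ =
      ∫ ξ, (∫ x, exp (I * (x * ξ : ℝ)) * φ x ∂μ) * F ξ ∂ν := by
  have hkernel : Integrable (fun z : ℝ × ℝ => exp (I * (z.1 * z.2 : ℝ)) * (φ z.1 * F z.2))
      (μ.prod ν) :=
    (hφ.mul_prod hF).bdd_mul (c := 1) (Continuous.aestronglyMeasurable (by fun_prop))
      (.of_forall fun z => (norm_exp_I_mul_ofReal _).le)
  calc ∫ x, (∫ ξ, exp (I * (x * ξ : ℝ)) * F ξ ∂ν) * φ x ∂μ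
      = ∫ x, ∫ ξ, exp (I * (x * ξ : ℝ)) * (φ x * F ξ) ∂ν ∂μ := by
        congr 1 with x
        rw [← integral_mul_const]
        congr 1 with ξ
        ring
    _ = ∫ ξ, ∫ x, exp (I * (x * ξ : ℝ)) * (φ x * F ξ) ∂μ ∂ν := integral_integral_swap hkernel
    _ = ∫ ξ, (∫ x, exp (I * (x * ξ : ℝ)) * φ x ∂μ) * F ξ ∂ν := by
        congr 1 with ξ
        rw [← integral_mul_const]
        congr 1 with x
        ring

theorem div_mem_Icc_neg_one_one {c ξ : ℝ} (hc : 0 < c) (hξ : ξ ∈ Icc (-c) c) :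
    ξ / c ∈ Icc (-1 : ℝ) 1 := by
  rw [mem_Icc, le_div_iff₀ hc, div_le_one hc, neg_one_mul]
  exact hξ

noncomputable def bandInvFourier (c : ℝ) (F : ℝ → ℂ) (x : ℝ) : ℂ :=
  1 / (2 * π) * ∫ ξ in -c..c, exp (I * (x * ξ : ℝ)) * F ξ

theorem continuous_bandInvFourier {c : ℝ} {F : ℝ → ℂ}
    (hF : IntervalIntegrable F volume (-c) c) : Continuous (bandInvFourier c F) := by
  refine continuous_const.mul (intervalIntegral.continuous_of_dominated_interval
    (bound := fun ξ => ‖F ξ‖) (fun x => ?_) (fun x => .of_forall fun ξ _ => ?_) hF.norm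
    (.of_forall fun ξ _ => by fun_prop))
  · exact (Continuous.aestronglyMeasurable (by fun_prop)).mul hF.def'.1
  · rw [norm_mul, norm_exp_I_mul_ofReal, one_mul]

theorem fourierCoeffOn_exp_mul {c : ℝ} (hc : 0 < c) (F : ℝ → ℂ) (s : ℝ) (n : ℤ) :
    fourierCoeffOn (neg_lt_self hc) (fun ξ => exp (I * (s * ξ : ℝ)) * F ξ) n =
      π / c * bandInvFourier c F (s - n * (π / c)) := by
  have hexp (ξ : ℝ) : fourier (-n) (ξ : AddCircle (c - -c)) • (exp (I * (s * ξ : ℝ)) * F ξ) =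
      exp (I * ((s - n * (π / c)) * ξ : ℝ)) * F ξ := by
    rw [fourier_coe_apply, smul_eq_mul, ← mul_assoc, ← Complex.exp_add]
    congr 2
    push_cast
    field_simp
    ring
  rw [fourierCoeffOn_eq_integral, bandInvFourier]
  simp_rw [hexp]
  rw [real_smul]
  push_cast
  field_simp
  ring

theorem hasSum_norm_sq_bandInvFourier {c : ℝ} (hc : 0 < c) {F : ℝ → ℂ}
    (hF : MemLp F 2 (volume.restrict (Ioc (-c) c))) (s : ℝ) :
    HasSum (fun n : ℤ => ‖bandInvFourier c F (s + n * (π / c))‖ ^ 2)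
      (c / (2 * π ^ 2) * ∫ ξ in -c..c, ‖F ξ‖ ^ 2) := by
  have hG : MemLp (fun ξ => exp (I * (s * ξ : ℝ)) * F ξ) 2 (volume.restrict (Ioc (-c) c)) :=
    hF.of_le ((Continuous.aestronglyMeasurable (by fun_prop)).mul hF.1)
      (.of_forall fun ξ => by rw [norm_mul, norm_exp_I_mul_ofReal, one_mul])
  have hparseval := hasSum_sq_fourierCoeffOn (neg_lt_self hc) hG
  have hval : (c - -c)⁻¹ • ∫ ξ in -c..c, ‖F ξ‖ ^ 2 =
      (π / c) ^ 2 * (c / (2 * π ^ 2) * ∫ ξ in -c..c, ‖F ξ‖ ^ 2) := by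
    rw [smul_eq_mul]
    field_simp
    ring
  simp only [fourierCoeffOn_exp_mul hc, norm_mul, norm_exp_I_mul_ofReal, one_mul] at hparseval
  rw [hval] at hparseval
  have hsum := (Equiv.neg ℤ).hasSum_iff.mpr hparseval
  simp only [Function.comp_def, Equiv.neg_apply, Int.cast_neg, neg_mul, sub_neg_eq_add, mul_pow,
    norm_div, norm_real, Real.norm_of_nonneg Real.pi_pos.le, Real.norm_of_nonneg hc.le] at hsum
  exact (hasSum_mul_left_iff (a₂ := (π / c) ^ 2) (by positivity)).mp hsum

theorem integral_norm_sq_bandInvFourier {c : ℝ} (hc : 0 < c) {F : ℝ → ℂ}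
    (hF : MemLp F 2 (volume.restrict (Ioc (-c) c))) :
    ∫ x, ‖bandInvFourier c F x‖ ^ 2 = (2 * π)⁻¹ * ∫ ξ in -c..c, ‖F ξ‖ ^ 2 := by
  have hcont : Continuous (bandInvFourier c F) := continuous_bandInvFourier
    ((intervalIntegrable_iff_integrableOn_Ioc_of_le (neg_le_self hc.le)).2
      (hF.integrable one_le_two))
  set A := ∫ ξ in -c..c, ‖F ξ‖ ^ 2
  have hA : 0 ≤ c / (2 * π ^ 2) * A := by
    refine mul_nonneg (by positivity) (intervalIntegral.integral_nonneg (neg_le_self hc.le) ?_)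
    exact fun _ _ => by positivity
  have hperiodic (s : ℝ) :
      ∑' n : ℤ, ENNReal.ofReal (‖bandInvFourier c F (s + n • (π / c))‖ ^ 2) =
        ENNReal.ofReal (c / (2 * π ^ 2) * A) := by
    simp only [zsmul_eq_mul]
    rw [← ENNReal.ofReal_tsum_of_nonneg (fun n => by positivity)
      (hasSum_norm_sq_bandInvFourier hc hF s).summable,
      (hasSum_norm_sq_bandInvFourier hc hF s).tsum_eq]
  rw [integral_eq_lintegral_of_nonneg_ae (.of_forall fun x => by positivity) (by fun_prop),
    lintegral_eq_setLIntegral_tsum_add_zsmul (T := π / c) (by positivity) (by fun_prop)]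
  simp only [hperiodic, setLIntegral_const, Real.volume_Ioc, sub_zero]
  rw [ENNReal.toReal_mul, ENNReal.toReal_ofReal hA, ENNReal.toReal_ofReal (by positivity)]
  field_simp

theorem integral_bandInvFourier_mul_eigenfunction {c : ℝ} (hc : 0 < c) {F : ℝ → ℂ}
    (hF : IntegrableOn F (Ioc (-c) c)) {ψ w : ℝ → ℂ}
    (hψw : IntegrableOn (fun x => ψ x * w x) (Ioc (-1) 1)) {μ : ℂ}
    (heig : ∀ x ∈ Icc (-1 : ℝ) 1,
      ∫ y in (-1 : ℝ)..1, exp (I * (c * x * y : ℝ)) * ψ y * w y = μ * ψ x) :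
    ∫ x in (-1 : ℝ)..1, bandInvFourier c F x * ψ x * w x =
      1 / (2 * π) * μ * ∫ ξ in -c..c, ψ (ξ / c) * F ξ := by
  have heig' : ∀ ξ ∈ Ioc (-c) c,
      (∫ x in Ioc (-1 : ℝ) 1, exp (I * (x * ξ : ℝ)) * (ψ x * w x)) * F ξ =
        μ * (ψ (ξ / c) * F ξ) := by
    intro ξ hξ
    rw [← mul_assoc, ← heig _ (div_mem_Icc_neg_one_one hc (Ioc_subset_Icc_self hξ)),
      intervalIntegral.integral_of_le (by norm_num)]
    congr 2 with y
    field_simp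
  simp only [bandInvFourier, mul_assoc, intervalIntegral.integral_of_le (neg_le_self hc.le),
    intervalIntegral.integral_of_le (by norm_num : (-1 : ℝ) ≤ 1), integral_const_mul]
  rw [integral_exp_mul_integral_swap hψw hF, setIntegral_congr_fun measurableSet_Ioc heig',
    integral_const_mul]

theorem norm_intervalIntegral_comp_div_mul_le {c : ℝ} (hc : 0 < c) {ψ : ℝ → ℝ}
    (hψ : ContinuousOn ψ (Icc (-1) 1)) {F : ℝ → ℂ}
    (hF : MemLp F 2 (volume.restrict (Ioc (-c) c))) :
    ‖∫ ξ in -c..c, (ψ (ξ / c) : ℂ) * F ξ‖ ≤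
      √(c * ∫ t in (-1 : ℝ)..1, ψ t ^ 2) * √(∫ ξ in -c..c, ‖F ξ‖ ^ 2) := by
  have hψc : MemLp (fun ξ => (ψ (ξ / c) : ℂ)) 2 (volume.restrict (Ioc (-c) c)) :=
    ContinuousOn.memLp_restrict_Ioc (continuous_ofReal.comp_continuousOn
      (hψ.comp (continuous_id.div_const c).continuousOn fun _ => div_mem_Icc_neg_one_one hc)) 2
  have hcs := norm_integral_mul_le_sqrt_mul_sqrt hψc hF
  simp only [norm_real, Real.norm_eq_abs, sq_abs,
    ← intervalIntegral.integral_of_le (neg_le_self hc.le)] at hcs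
  rwa [intervalIntegral.integral_comp_div (fun t => ψ t ^ 2) hc.ne', neg_div, div_self hc.ne',
    smul_eq_mul] at hcs

theorem inner_product_bound_bandlimited_general
    (c α : ℝ) (hc : 0 < c) (hα : 0 ≤ α)
    (f F : ℝ → ℂ)
    (hF2 : MemLp F 2 (volume : Measure ℝ))
    (hf : ∀ x : ℝ, f x = (1 / (2 * Real.pi)) *
      ∫ ξ in (-c)..c, Complex.exp (Complex.I * (x * ξ : ℝ)) * F ξ)
    (ψ : ℝ → ℝ) (hψ : ContinuousOn ψ (Set.Icc (-1) 1))
    (μ : ℂ)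
    (heig : ∀ x ∈ Set.Icc (-1 : ℝ) 1,
      ∫ y in (-1 : ℝ)..1,
          Complex.exp (Complex.I * (c * x * y : ℝ)) * (ψ y : ℂ) * (((1 - y ^ 2) ^ α : ℝ) : ℂ)
        = μ * (ψ x : ℂ)) :
    ‖∫ x in (-1 : ℝ)..1, f x * (ψ x : ℂ) * (((1 - x ^ 2) ^ α : ℝ) : ℂ)‖
      ≤ ‖μ‖ * Real.sqrt (c / (2 * Real.pi)) *
          Real.sqrt (∫ t in (-1 : ℝ)..1, (ψ t) ^ 2) *
          Real.sqrt (∫ x : ℝ, ‖f x‖ ^ 2) := by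
  obtain rfl : f = bandInvFourier c F := funext hf
  have hF : MemLp F 2 (volume.restrict (Ioc (-c) c)) := hF2.restrict _
  have hweight : Continuous fun x : ℝ => (1 - x ^ 2) ^ α :=
    (by fun_prop : Continuous fun x : ℝ => 1 - x ^ 2).rpow_const fun _ => Or.inr hα
  have hψw : ContinuousOn (fun x => (ψ x : ℂ) * (((1 - x ^ 2) ^ α : ℝ) : ℂ)) (Icc (-1) 1) :=
    (continuous_ofReal.comp_continuousOn hψ).mul (continuous_ofReal.comp hweight).continuousOn
  rw [integral_bandInvFourier_mul_eigenfunction hc (hF.integrable one_le_two)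
    (hψw.integrableOn_Icc.mono_set Ioc_subset_Icc_self) heig, integral_norm_sq_bandInvFourier hc hF]
  have h2π : 0 < 2 * π := by positivity
  calc ‖1 / (2 * π) * μ * ∫ ξ in -c..c, (ψ (ξ / c) : ℂ) * F ξ‖
      = ‖μ‖ * ‖∫ ξ in -c..c, (ψ (ξ / c) : ℂ) * F ξ‖ / (2 * π) := by
        rw [norm_mul, norm_mul, norm_div, norm_one, norm_mul, RCLike.norm_ofNat, norm_real,
          Real.norm_of_nonneg Real.pi_pos.le]
        ring
    _ ≤ ‖μ‖ * (√(c * ∫ t in (-1 : ℝ)..1, ψ t ^ 2) * √(∫ ξ in -c..c, ‖F ξ‖ ^ 2)) / (2 * π) := by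
        gcongr
        exact norm_intervalIntegral_comp_div_mul_le hc hψ hF
    _ = _ := by
        rw [Real.sqrt_mul hc.le, Real.sqrt_mul (inv_nonneg.2 h2π.le), Real.sqrt_div hc.le,
          Real.sqrt_inv]
        field_simp
        rw [Real.sq_sqrt h2π.le]
        ring

/-- For a band-limited function `f ∈ L²(ℝ)` with Fourier transform `F`
vanishing a.e. outside `[-c,c]` (and `f` given by its continuous representative
`f(x) = (1/2π)∫_{-c}^{c} e^{ixξ} F(ξ) dξ`), and an eigenfunction `ψ` of the finite weighted
Fourier transform with eigenvalue `μ`, one has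
`|∫_{-1}^{1} f(x)ψ(x)(1-x²)^α dx| ≤ |μ| √(c/2π) (∫_{-1}^{1} ψ²)^{1/2} ‖f‖_{L²(ℝ)}`. -/
theorem inner_product_bound_bandlimited
    (c α : ℝ) (hc : 0 < c) (hα : 0 ≤ α)
    (f F : ℝ → ℂ)
    (hF2 : MemLp F 2 (volume : Measure ℝ))
    (hsupp : ∀ᵐ ξ : ℝ, c < |ξ| → F ξ = 0)
    (hf : ∀ x : ℝ, f x = (1 / (2 * Real.pi)) *
      ∫ ξ in (-c)..c, Complex.exp (Complex.I * (x * ξ : ℝ)) * F ξ)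
    (hfL2 : MemLp f 2 (volume : Measure ℝ))
    (ψ : ℝ → ℝ) (hψ : ContinuousOn ψ (Set.Icc (-1) 1))
    (μ : ℂ)
    (heig : ∀ x ∈ Set.Icc (-1 : ℝ) 1,
      ∫ y in (-1 : ℝ)..1,
          Complex.exp (Complex.I * (c * x * y : ℝ)) * (ψ y : ℂ) * (((1 - y ^ 2) ^ α : ℝ) : ℂ)
        = μ * (ψ x : ℂ)) :
    ‖∫ x in (-1 : ℝ)..1, f x * (ψ x : ℂ) * (((1 - x ^ 2) ^ α : ℝ) : ℂ)‖
      ≤ ‖μ‖ * Real.sqrt (c / (2 * Real.pi)) *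
          Real.sqrt (∫ t in (-1 : ℝ)..1, (ψ t) ^ 2) *
          Real.sqrt (∫ x : ℝ, ‖f x‖ ^ 2) :=
  inner_product_bound_bandlimited_general c α hc hα f F hF2 hf ψ hψ μ heig
end

section
/- Let α > −1/2. Then for every integer k ≥ 1, the Jacobi normalization constant h_k = 2^{2α+1} Γ(k+α+1)² / (k! (2k+2α+1) Γ(k+2α+1)) satisfies (e/π) · (2e)^{2α+1} / ((3/2)^{3/2} (3/2+2α)^{3/2+2α}) · 1/(2k+2α+1) ≤ h_k ≤ (π/e) · (2/e)^{2α+1} · (3/2)^{3/2} (3/2+2α)^{3/2+2α} / (2k+2α+1). -/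
/-!
Write `h_k = q_k / (2k+2α+1)` with `q_k = 2^{2α+1} Γ(k+α+1)² / (k! Γ(k+2α+1))`. Since
`q_{k+1} / q_k = (k+α+1)² / ((k+1)(k+2α+1)) ≥ 1`, the sequence `q_k` is nondecreasing, and
log-convexity of `Γ` gives `Γ(k+α+1)² ≤ Γ(k+1) Γ(k+2α+1)`, i.e. `q_k ≤ 2^{2α+1}`. Legendre's
duplication formula gives `q_1 = √π (α+1) Γ(α+2) / Γ(α+3/2)`, which log-convexity again
(`Γ(x+1/2) ≤ √x Γ(x)`) bounds below by `√π (α+1)(α+3/2) / √(α+2)`. What is left are two inequalities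
between explicit functions of `α`: the upper one follows from `t log t ≥ t - 1`; for the lower one,
the difference of the logarithms is convex in `α`, decreasing at `α = -1/2` and increasing at
`α = -1/4`, so it is bounded below by its tangent at `-1/2` evaluated at `-1/4`, which is positive.
-/

open Real Set

namespace Real

theorem Gamma_sq_midpoint_le {x y : ℝ} (hx : 0 < x) (hy : 0 < y) :
    Gamma ((x + y) / 2) ^ 2 ≤ Gamma x * Gamma y := by
  have h := Gamma_mul_add_mul_le_rpow_Gamma_mul_rpow_Gamma hx hy one_half_pos one_half_pos
    (add_halves 1)
  rw [← sqrt_eq_rpow, ← sqrt_eq_rpow, ← sqrt_mul (Gamma_pos_of_pos hx).le,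
    show 1 / 2 * x + 1 / 2 * y = (x + y) / 2 by ring] at h
  exact (le_sqrt (Gamma_pos_of_pos (by positivity)).le (by positivity)).mp h

theorem Gamma_add_half_le_sqrt_mul_Gamma {x : ℝ} (hx : 0 < x) :
    Gamma (x + 1 / 2) ≤ √x * Gamma x := by
  have h := Gamma_sq_midpoint_le hx (by positivity : 0 < x + 1)
  rw [show (x + (x + 1)) / 2 = x + 1 / 2 by ring, Gamma_add_one hx.ne'] at h
  rw [← pow_le_pow_iff_left₀ (Gamma_pos_of_pos (by positivity)).le (by positivity) two_ne_zero,
    mul_pow, sq_sqrt hx.le]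
  linarith

end Real

theorem ConvexOn.add_mul_sub_le_of_hasDerivAt {S : Set ℝ} {f : ℝ → ℝ} {x y f' : ℝ}
    (hf : ConvexOn ℝ S f) (hx : x ∈ S) (hy : y ∈ S) (hxy : x ≤ y) (hf' : HasDerivAt f f' x) :
    f x + f' * (y - x) ≤ f y := by
  rcases hxy.eq_or_lt with rfl | hlt
  · simp
  have := hf.le_slope_of_hasDerivAt hx hy hlt hf'
  rw [slope_def_field, le_div_iff₀ (sub_pos.mpr hlt)] at this
  linarith

theorem ConvexOn.add_mul_sub_le_of_hasDerivAt_of_nonpos_of_nonneg {S : Set ℝ} {f : ℝ → ℝ}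
    {a b x da db : ℝ} (hf : ConvexOn ℝ S f) (ha : a ∈ S) (hb : b ∈ S) (hx : x ∈ S)
    (hab : a ≤ b) (hax : a ≤ x) (hda : HasDerivAt f da a) (hdb : HasDerivAt f db b)
    (hda_nonpos : da ≤ 0) (hdb_nonneg : 0 ≤ db) :
    f a + da * (b - a) ≤ f x := by
  rcases le_total x b with hxb | hbx
  · have htangent := hf.add_mul_sub_le_of_hasDerivAt ha hx hax hda
    have : da * (b - a) ≤ da * (x - a) := mul_le_mul_of_nonpos_left (by linarith) hda_nonpos
    linarith
  · have htangent_a := hf.add_mul_sub_le_of_hasDerivAt ha hb hab hda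
    have htangent_b := hf.add_mul_sub_le_of_hasDerivAt hb hx hbx hdb
    have : 0 ≤ db * (x - b) := mul_nonneg hdb_nonneg (by linarith)
    linarith

-- `q_k = h_k (2k+2α+1)`.
noncomputable def scaledJacobiNorm (α : ℝ) (k : ℕ) : ℝ :=
  2 ^ (2 * α + 1) * Gamma (k + α + 1) ^ 2 / (k.factorial * Gamma (k + 2 * α + 1))

section
variable {α : ℝ}

theorem scaledJacobiNorm_succ (hα : -1 / 2 < α) (k : ℕ) :
    scaledJacobiNorm α (k + 1) =
      scaledJacobiNorm α k * ((k + α + 1) ^ 2 / ((k + 1) * (k + 2 * α + 1))) := by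
  have h₁ : 0 < (k : ℝ) + α + 1 := by linarith [k.cast_nonneg (α := ℝ)]
  have h₂ : 0 < (k : ℝ) + 2 * α + 1 := by linarith [k.cast_nonneg (α := ℝ)]
  simp only [scaledJacobiNorm, Nat.factorial_succ, Nat.cast_mul, Nat.cast_succ]
  rw [show (k : ℝ) + 1 + α + 1 = k + α + 1 + 1 by ring, Gamma_add_one h₁.ne',
    show (k : ℝ) + 1 + 2 * α + 1 = k + 2 * α + 1 + 1 by ring, Gamma_add_one h₂.ne']
  field_simp

theorem monotone_scaledJacobiNorm (hα : -1 / 2 < α) : Monotone (scaledJacobiNorm α) := by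
  refine monotone_nat_of_le_succ fun k ↦ ?_
  have h₂ : 0 < (k : ℝ) + 2 * α + 1 := by linarith [k.cast_nonneg (α := ℝ)]
  have hq : 0 ≤ scaledJacobiNorm α k := by unfold scaledJacobiNorm; positivity
  rw [scaledJacobiNorm_succ hα]
  refine le_mul_of_one_le_right hq ((one_le_div (by positivity)).mpr ?_)
  nlinarith [sq_nonneg α]

theorem scaledJacobiNorm_le_two_rpow (hα : -1 / 2 < α) (k : ℕ) :
    scaledJacobiNorm α k ≤ 2 ^ (2 * α + 1) := by
  have h₂ : 0 < (k : ℝ) + 2 * α + 1 := by linarith [k.cast_nonneg (α := ℝ)]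
  have hmid := Gamma_sq_midpoint_le (by positivity : 0 < (k : ℝ) + 1) h₂
  rw [show ((k : ℝ) + 1 + (k + 2 * α + 1)) / 2 = k + α + 1 by ring,
    Gamma_nat_eq_factorial] at hmid
  rw [scaledJacobiNorm, mul_div_assoc]
  exact mul_le_of_le_one_right (by positivity) ((div_le_one (by positivity)).mpr hmid)

theorem scaledJacobiNorm_one (hα : -1 / 2 < α) :
    scaledJacobiNorm α 1 = √π * (α + 1) * Gamma (α + 2) / Gamma (α + 3 / 2) := by
  have h₁ : 0 < α + 1 := by linarith
  have hdup : 2 ^ (2 * α + 1) * (Gamma (α + 1) * Gamma (α + 3 / 2)) = √π * Gamma (2 * α + 2) := by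
    rw [show α + 3 / 2 = α + 1 + 1 / 2 by ring, Gamma_mul_Gamma_add_half,
      show 2 * (α + 1) = 2 * α + 2 by ring, show 1 - (2 * α + 2) = -(2 * α + 1) by ring,
      rpow_neg zero_le_two]
    field_simp
  have : 0 < Gamma (α + 3 / 2) := Gamma_pos_of_pos (by linarith)
  have : 0 < Gamma (2 * α + 2) := Gamma_pos_of_pos (by linarith)
  rw [scaledJacobiNorm, Nat.cast_one, Nat.factorial_one, Nat.cast_one,
    show (1 : ℝ) + α + 1 = α + 2 by ring, show (1 : ℝ) + 2 * α + 1 = 2 * α + 2 by ring,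
    show α + 2 = α + 1 + 1 by ring, Gamma_add_one h₁.ne',
    div_eq_div_iff (by positivity) (by positivity)]
  linear_combination (α + 1) ^ 2 * Gamma (α + 1) * hdup

theorem le_scaledJacobiNorm_one (hα : -1 / 2 < α) :
    √π * (α + 1) * (α + 3 / 2) / √(α + 2) ≤ scaledJacobiNorm α 1 := by
  have h := Gamma_add_half_le_sqrt_mul_Gamma (by linarith : 0 < α + 2)
  rw [show α + 2 + 1 / 2 = α + 3 / 2 + 1 by ring, Gamma_add_one (by linarith)] at h
  have : 0 < Gamma (α + 3 / 2) := Gamma_pos_of_pos (by linarith)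
  have : 0 < √π * (α + 1) := mul_pos (by positivity) (by linarith)
  rw [scaledJacobiNorm_one hα, div_le_div_iff₀ (sqrt_pos.mpr (by linarith)) (by positivity)]
  calc √π * (α + 1) * (α + 3 / 2) * Gamma (α + 3 / 2)
      = √π * (α + 1) * ((α + 3 / 2) * Gamma (α + 3 / 2)) := by ring
    _ ≤ √π * (α + 1) * (√(α + 2) * Gamma (α + 2)) := by gcongr
    _ = _ := by ring

end

theorem exp_three_lt_pi_sq_mul : exp 3 < π ^ 2 * (3 / 2) ^ 3 := by
  have h : exp 3 = exp 1 ^ 3 := by rw [← exp_nat_mul]; norm_num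
  rw [h]
  calc exp 1 ^ 3 < 3 ^ 3 := by gcongr; exact exp_one_lt_three
    _ ≤ 3 ^ 2 * (3 / 2) ^ 3 := by norm_num
    _ ≤ π ^ 2 * (3 / 2) ^ 3 := by gcongr; exact pi_gt_three.le

-- The margin at the tangent point: `3/2 log π + log 3 - 7/2 log 2 - 1/3 > 0`.
theorem two_pow_mul_exp_two_lt : 2 ^ 21 * exp 2 < π ^ 9 * 3 ^ 6 := by
  have h : exp 2 = exp 1 ^ 2 := by rw [← exp_nat_mul]; norm_num
  rw [h]
  calc (2 : ℝ) ^ 21 * exp 1 ^ 2 < 2 ^ 21 * 2.72 ^ 2 := by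
        gcongr; exact exp_one_lt_d9.trans (by norm_num)
    _ ≤ 3.14 ^ 9 * 3 ^ 6 := by norm_num
    _ ≤ π ^ 9 * 3 ^ 6 := by gcongr; exact pi_gt_d2.le

-- `log (√π (α+1)(α+3/2) / √(α+2))` minus the logarithm of the lower constant of the theorem.
noncomputable def lowerConstantLogGap (α : ℝ) : ℝ :=
  log (α + 1) + log (α + 3 / 2) - 1 / 2 * log (α + 2) + (3 / 2 + 2 * α) * log (3 / 2 + 2 * α)
    - (2 * α + 1) * (log 2 + 1) + (3 / 2 * log π + 3 / 2 * log (3 / 2) - 1)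

theorem hasDerivAt_lowerConstantLogGap {α : ℝ} (hα : -3 / 4 < α) :
    HasDerivAt lowerConstantLogGap
      ((α + 1)⁻¹ + (α + 3 / 2)⁻¹ - (α + 2)⁻¹ / 2 + 2 * log (3 / 2 + 2 * α) - 2 * log 2) α := by
  have hid := hasDerivAt_id' α
  have hlin : HasDerivAt (fun x ↦ 3 / 2 + 2 * x) 2 α := by
    simpa using (hid.const_mul 2).const_add (3 / 2)
  have h := (((((hid.add_const 1).log (by linarith)).add
      ((hid.add_const (3 / 2)).log (by linarith))).sub
      (((hid.add_const 2).log (by linarith)).const_mul (1 / 2))).add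
      (hlin.mul (hlin.log (by linarith)))).sub
      (((hid.const_mul 2).add_const 1).mul_const (log 2 + 1))
  refine (h.add_const (3 / 2 * log π + 3 / 2 * log (3 / 2) - 1)).congr_deriv ?_
  rw [mul_div_cancel₀ _ (by linarith)]
  ring

theorem hasDerivAt_deriv_lowerConstantLogGap {α : ℝ} (hα : -3 / 4 < α) :
    HasDerivAt (fun x ↦
      (x + 1)⁻¹ + (x + 3 / 2)⁻¹ - (x + 2)⁻¹ / 2 + 2 * log (3 / 2 + 2 * x) - 2 * log 2)
      (-((α + 1) ^ 2)⁻¹ - ((α + 3 / 2) ^ 2)⁻¹ + ((α + 2) ^ 2)⁻¹ / 2 + 2 * (α + 3 / 4)⁻¹) α := by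
  have hid := hasDerivAt_id' α
  have h := ((((hid.add_const 1).inv (by linarith)).add
    ((hid.add_const (3 / 2)).inv (by linarith))).sub
    (((hid.add_const 2).inv (by linarith)).div_const 2)).add
    ((((hid.const_mul 2).const_add (3 / 2)).log (by linarith)).const_mul 2) |>.sub_const
    (2 * log 2)
  refine h.congr_deriv ?_
  field_simp
  ring

theorem convexOn_lowerConstantLogGap : ConvexOn ℝ (Ioi (-3 / 4)) lowerConstantLogGap := by
  refine convexOn_of_hasDerivWithinAt2_nonneg (convex_Ioi _)
    (fun x hx ↦ (hasDerivAt_lowerConstantLogGap hx).continuousAt.continuousWithinAt)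
    (fun x hx ↦ (hasDerivAt_lowerConstantLogGap (interior_subset hx)).hasDerivWithinAt)
    (fun x hx ↦ (hasDerivAt_deriv_lowerConstantLogGap (interior_subset hx)).hasDerivWithinAt)
    fun x hx ↦ ?_
  rw [interior_Ioi, mem_Ioi] at hx
  have h₁ : ((x + 1) ^ 2)⁻¹ ≤ (x + 3 / 4)⁻¹ :=
    inv_anti₀ (by linarith) (by nlinarith [sq_nonneg (x + 1 / 2)])
  have h₂ : ((x + 3 / 2) ^ 2)⁻¹ ≤ (3 * (x + 3 / 4))⁻¹ :=
    inv_anti₀ (by linarith) (by nlinarith [sq_nonneg x])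
  rw [mul_inv] at h₂
  have : 0 ≤ ((x + 2) ^ 2)⁻¹ / 2 := by positivity
  have : 0 < (x + 3 / 4)⁻¹ := inv_pos.mpr (by linarith)
  linarith

theorem lowerConstantLogGap_nonneg {α : ℝ} (hα : -1 / 2 ≤ α) : 0 ≤ lowerConstantLogGap α := by
  have hlog2 := log_two_gt_d9
  have hlog2' := log_two_lt_d9
  have hlog_half : log (1 / 2) = -log 2 := by rw [one_div, log_inv]
  have hmin := convexOn_lowerConstantLogGap.add_mul_sub_le_of_hasDerivAt_of_nonpos_of_nonneg
    (a := -1 / 2) (b := -1 / 4) (x := α) (by norm_num) (by norm_num) (by simp; linarith)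
    (by norm_num) hα (hasDerivAt_lowerConstantLogGap (by norm_num))
    (hasDerivAt_lowerConstantLogGap (by norm_num))
    (by norm_num; linarith) (by norm_num; linarith)
  refine le_trans ?_ hmin
  have hnum := log_lt_log (by positivity) two_pow_mul_exp_two_lt
  rw [log_mul (by positivity) (by positivity), log_mul (by positivity) (by positivity),
    log_pow, log_pow, log_pow, log_exp] at hnum
  norm_num [lowerConstantLogGap, log_div (three_ne_zero (α := ℝ)) two_ne_zero] at hnum ⊢
  linarith

theorem jacobi_lower_constant_le {α : ℝ} (hα : -1 / 2 < α) :
    exp 1 / π * (2 * exp 1) ^ (2 * α + 1) /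
        ((3 / 2 : ℝ) ^ (3 / 2 : ℝ) * (3 / 2 + 2 * α) ^ (3 / 2 + 2 * α))
      ≤ √π * (α + 1) * (α + 3 / 2) / √(α + 2) := by
  have ht : 0 < 3 / 2 + 2 * α := by linarith
  have : 0 < α + 1 := by linarith
  have : 0 < α + 3 / 2 := by linarith
  have : 0 < α + 2 := by linarith
  have hlhs : log (exp 1 / π * (2 * exp 1) ^ (2 * α + 1) /
      ((3 / 2 : ℝ) ^ (3 / 2 : ℝ) * (3 / 2 + 2 * α) ^ (3 / 2 + 2 * α))) =
      1 - log π + (2 * α + 1) * (log 2 + 1) - 3 / 2 * log (3 / 2)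
        - (3 / 2 + 2 * α) * log (3 / 2 + 2 * α) := by
    rw [log_div (by positivity) (by positivity), log_mul (by positivity) (by positivity),
      log_div (by positivity) (by positivity), log_rpow (by positivity),
      log_mul (by positivity) (by positivity), log_mul (by positivity) (by positivity),
      log_rpow (by positivity), log_rpow ht, log_exp]
    ring
  have hrhs : log (√π * (α + 1) * (α + 3 / 2) / √(α + 2)) =
      log π / 2 + log (α + 1) + log (α + 3 / 2) - log (α + 2) / 2 := by
    rw [log_div (by positivity) (by positivity), log_mul (by positivity) (by positivity),
      log_mul (by positivity) (by positivity), log_sqrt pi_pos.le, log_sqrt (by positivity)]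
  rw [← log_le_log_iff (by positivity) (by positivity), hlhs, hrhs]
  have := lowerConstantLogGap_nonneg hα.le
  rw [lowerConstantLogGap] at this
  linarith

theorem two_rpow_le_jacobi_upper_constant {α : ℝ} (hα : -1 / 2 < α) :
    (2 : ℝ) ^ (2 * α + 1) ≤ π / exp 1 * (2 / exp 1) ^ (2 * α + 1) *
      ((3 / 2 : ℝ) ^ (3 / 2 : ℝ) * (3 / 2 + 2 * α) ^ (3 / 2 + 2 * α)) := by
  have ht : 0 < 3 / 2 + 2 * α := by linarith
  have hrhs : log (π / exp 1 * (2 / exp 1) ^ (2 * α + 1) *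
      ((3 / 2 : ℝ) ^ (3 / 2 : ℝ) * (3 / 2 + 2 * α) ^ (3 / 2 + 2 * α))) =
      log π - 1 + (2 * α + 1) * (log 2 - 1) + 3 / 2 * log (3 / 2)
        + (3 / 2 + 2 * α) * log (3 / 2 + 2 * α) := by
    rw [log_mul (by positivity) (by positivity), log_mul (by positivity) (by positivity),
      log_div (by positivity) (by positivity), log_rpow (by positivity),
      log_div (by positivity) (by positivity), log_mul (by positivity) (by positivity),
      log_rpow (by positivity), log_rpow ht, log_exp]
    ring
  rw [← log_le_log_iff (by positivity) (by positivity), log_rpow two_pos, hrhs]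
  have htlog := self_sub_one_le_mul_log ht.le
  have hnum := log_lt_log (exp_pos 3) exp_three_lt_pi_sq_mul
  rw [log_exp, log_mul (by positivity) (by positivity), log_pow, log_pow] at hnum
  push_cast at hnum
  linarith

/-- Two-sided bound on the Jacobi normalization constant
`h_k = 2^{2α+1} Γ(k+α+1)² / (k!(2k+2α+1)Γ(k+2α+1))` for `α > -1/2` and `k ≥ 1`:
`(e/π)(2e)^{2α+1}/((3/2)^{3/2}(3/2+2α)^{3/2+2α}) · 1/(2k+2α+1) ≤ h_k
  ≤ (π/e)(2/e)^{2α+1}(3/2)^{3/2}(3/2+2α)^{3/2+2α}/(2k+2α+1)`. -/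
theorem jacobi_norm_constant_bounds (α : ℝ) (hα : -(1 : ℝ) / 2 < α) :
    ∀ k : ℕ, 1 ≤ k →
      (Real.exp 1 / Real.pi) * (2 * Real.exp 1) ^ (2 * α + 1) /
          (((3 : ℝ) / 2) ^ ((3 : ℝ) / 2) * (3 / 2 + 2 * α) ^ ((3 : ℝ) / 2 + 2 * α)) *
          (1 / (2 * (k : ℝ) + 2 * α + 1))
        ≤ 2 ^ (2 * α + 1) * Real.Gamma ((k : ℝ) + α + 1) ^ 2 /
            ((k.factorial : ℝ) * (2 * (k : ℝ) + 2 * α + 1) * Real.Gamma ((k : ℝ) + 2 * α + 1)) ∧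
      2 ^ (2 * α + 1) * Real.Gamma ((k : ℝ) + α + 1) ^ 2 /
          ((k.factorial : ℝ) * (2 * (k : ℝ) + 2 * α + 1) * Real.Gamma ((k : ℝ) + 2 * α + 1))
        ≤ (Real.pi / Real.exp 1) * (2 / Real.exp 1) ^ (2 * α + 1) *
            (((3 : ℝ) / 2) ^ ((3 : ℝ) / 2) * (3 / 2 + 2 * α) ^ ((3 : ℝ) / 2 + 2 * α)) /
            (2 * (k : ℝ) + 2 * α + 1) := by
  intro k hk
  have hD : 0 < 2 * (k : ℝ) + 2 * α + 1 := by
    have : (1 : ℝ) ≤ k := by exact_mod_cast hk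
    linarith
  have hh : 2 ^ (2 * α + 1) * Gamma ((k : ℝ) + α + 1) ^ 2 /
      ((k.factorial : ℝ) * (2 * (k : ℝ) + 2 * α + 1) * Gamma ((k : ℝ) + 2 * α + 1)) =
      scaledJacobiNorm α k * (1 / (2 * (k : ℝ) + 2 * α + 1)) := by
    rw [scaledJacobiNorm, mul_one_div, div_div]
    ring
  rw [hh]
  constructor
  · gcongr
    calc _ ≤ _ := jacobi_lower_constant_le hα
      _ ≤ scaledJacobiNorm α 1 := le_scaledJacobiNorm_one hα
      _ ≤ scaledJacobiNorm α k := monotone_scaledJacobiNorm hα hk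
  · rw [← div_eq_mul_one_div]
    gcongr
    exact (scaledJacobiNorm_le_two_rpow hα k).trans (two_rpow_le_jacobi_upper_constant hα)
end
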